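/- Let Q be an IPC formula and let θ = (Z_N, …, Z_0) be a finite nonempty sequence of IPC formulas. If there is an IPC formula W such that both QW = W ⊃ Q and QQW = (W ⊃ Q) ⊃ Q occur as terms of θ, then C(θ) = Z_N ⊃ (⋯(Z_0 ⊃ Q)⋯) is a theorem of IPC. -/
import Mathlib


/-- Formulas of the Implicational Propositional Calculus: propositional
variables and implication. -/
inductive IPCFormula : Type where
  | var : ℕ → IPCFormula
  | imp : IPCFormula → IPCFormula → IPCFormula

infixr:60 " ⊃' " => IPCFormula.imp

/-- Derivability from a set of hypotheses Γ in the Hilbert system with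
axiom schemes IPC1, IPC2, Peirce and the rule modus ponens. -/
inductive IPCDeriv : Set IPCFormula → IPCFormula → Prop where
  | hyp {Γ : Set IPCFormula} {X : IPCFormula} : X ∈ Γ → IPCDeriv Γ X
  | ipc1 {Γ : Set IPCFormula} (X Y : IPCFormula) :
      IPCDeriv Γ (X ⊃' (Y ⊃' X))
  | ipc2 {Γ : Set IPCFormula} (X Y Z : IPCFormula) :
      IPCDeriv Γ ((X ⊃' (Y ⊃' Z)) ⊃' ((X ⊃' Y) ⊃' (X ⊃' Z)))
  | peirce {Γ : Set IPCFormula} (X Y : IPCFormula) :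
      IPCDeriv Γ (((X ⊃' Y) ⊃' X) ⊃' X)
  | mp {Γ : Set IPCFormula} {X Y : IPCFormula} :
      IPCDeriv Γ (X ⊃' Y) → IPCDeriv Γ X → IPCDeriv Γ Y

/-- A theorem of IPC: derivable from no hypotheses. -/
def IPCThm (X : IPCFormula) : Prop := IPCDeriv ∅ X

/-- Disjunction defined within IPC: X ∨ Y := (X ⊃ Y) ⊃ Y. -/
def IPCFormula.disj (X Y : IPCFormula) : IPCFormula := (X ⊃' Y) ⊃' Y

/-- For a sequence (Z_N, …, Z_0) of IPC formulas (given as Z : ℕ → IPCFormula),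
C(Z_N, …, Z_0) := Z_N ⊃ (Z_{N−1} ⊃ (⋯(Z_0 ⊃ Q)⋯)). -/
def IPCC (Q : IPCFormula) (Z : ℕ → IPCFormula) : ℕ → IPCFormula
  | 0 => Z 0 ⊃' Q
  | n + 1 => Z (n + 1) ⊃' IPCC Q Z n


lemma ipc_mono {Γ Δ : Set IPCFormula} {X : IPCFormula} (h : IPCDeriv Γ X) (hs : Γ ⊆ Δ) :
    IPCDeriv Δ X := by
  induction h with
  | hyp h => exact .hyp (hs h)
  | ipc1 X Y => exact .ipc1 X Y
  | ipc2 X Y Z => exact .ipc2 X Y Z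
  | peirce X Y => exact .peirce X Y
  | mp _ _ ih1 ih2 => exact .mp ih1 ih2

lemma ipc_id (Γ : Set IPCFormula) (A : IPCFormula) : IPCDeriv Γ (A ⊃' A) :=
  .mp (.mp (.ipc2 A (A ⊃' A) A) (.ipc1 A (A ⊃' A))) (.ipc1 A A)

lemma ipc_deduction_aux {Δ : Set IPCFormula} {B : IPCFormula} (h : IPCDeriv Δ B) :
    ∀ (Γ : Set IPCFormula) (A : IPCFormula), Δ = insert A Γ → IPCDeriv Γ (A ⊃' B) := by
  induction h with
  | @hyp X hX =>
      intro Γ A hΔ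
      subst hΔ
      rcases Set.mem_insert_iff.mp hX with rfl | hX
      · exact ipc_id Γ X
      · exact .mp (.ipc1 X A) (.hyp hX)
  | ipc1 X Y => intro Γ A _; exact .mp (.ipc1 _ A) (.ipc1 X Y)
  | ipc2 X Y Z => intro Γ A _; exact .mp (.ipc1 _ A) (.ipc2 X Y Z)
  | peirce X Y => intro Γ A _; exact .mp (.ipc1 _ A) (.peirce X Y)
  | @mp X Y _ _ ih1 ih2 =>
      intro Γ A hΔ
      exact .mp (.mp (.ipc2 A X Y) (ih1 Γ A hΔ)) (ih2 Γ A hΔ)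

lemma ipc_deduction {Γ : Set IPCFormula} {A B : IPCFormula}
    (h : IPCDeriv (insert A Γ) B) : IPCDeriv Γ (A ⊃' B) :=
  ipc_deduction_aux h Γ A rfl

lemma ipc_peel (Q : IPCFormula) (Z : ℕ → IPCFormula) :
    ∀ (n : ℕ) (Γ : Set IPCFormula),
      IPCDeriv (Γ ∪ Z '' Set.Iic n) Q → IPCDeriv Γ (IPCC Q Z n) := by
  intro n
  induction n with
  | zero =>
      intro Γ h
      apply ipc_deduction
      apply ipc_mono h
      intro x hx
      rcases hx with hx | ⟨k, hk, rfl⟩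
      · exact Set.mem_insert_of_mem _ hx
      · have hk0 : k = 0 := Nat.le_zero.mp hk
        subst hk0; exact Set.mem_insert _ _
  | succ n ih =>
      intro Γ h
      show IPCDeriv Γ (Z (n+1) ⊃' IPCC Q Z n)
      apply ipc_deduction
      apply ih
      apply ipc_mono h
      intro x hx
      rcases hx with hx | ⟨k, hk, rfl⟩
      · exact Or.inl (Set.mem_insert_of_mem _ hx)
      · rcases Nat.lt_succ_iff_lt_or_eq.mp (Nat.lt_succ_of_le hk) with hk' | rfl
        · exact Or.inr ⟨k, Nat.lt_succ_iff.mp hk', rfl⟩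
        · exact Or.inl (Set.mem_insert _ _)

theorem stmt_15 (Q : IPCFormula) (Z : ℕ → IPCFormula) (N : ℕ)
    (W : IPCFormula) (i j : ℕ) (hi : i ≤ N) (hj : j ≤ N)
    (hZi : Z i = (W ⊃' Q)) (hZj : Z j = ((W ⊃' Q) ⊃' Q)) :
    IPCThm (IPCC Q Z N) := by
  have hq : IPCDeriv ((∅ : Set IPCFormula) ∪ Z '' Set.Iic N) Q := by
    apply IPCDeriv.mp (X := W ⊃' Q)
    · exact .hyp (Or.inr ⟨j, hj, hZj⟩)
    · exact .hyp (Or.inr ⟨i, hi, hZi⟩)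
  exact ipc_peel Q Z N ∅ hq
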